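/- Let N ≥ 1 and let A be a subset of ℝ^N equipped with the Chebyshev distance d^N(x,y) = max_{n=1,…,N} |x_n − y_n|. If A is bounded, then there exists a map K from A into the Gromov–Hausdorff space (the space of isometry classes of nonempty compact metric spaces with the Gromov–Hausdorff distance d_GH) such that d_GH(K(x), K(y)) = d^N(x, y) for all x, y ∈ A; i.e., A embeds isometrically into the Gromov–Hausdorff space. -/

import Mathlib

/-!
Each point `p` of the cube `[-C, C]^N` is encoded by a metric space on `Option (Fin N)`, with
base point `∗ = none`, `d(∗, i) = L + S i + 2 p_i` and `d(i, j) = L + S N`. For `L` large all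
nonzero distances lie within a factor two of each other, so the triangle inequality is automatic.
The identity map, whose distortion is `2 max_i |p_i - q_i|`, shows
`d_GH(p, q) ≤ max_i |p_i - q_i|`. Conversely, if `d_GH(p, q) < 2C`, a map of distortion
`2 d_GH(p, q)` must send the pair `(∗, i)` to a pair at the same level `S i`, because the spacing
`S` exceeds every error term; only `(∗, i)` sits at that level, and comparing the two distances
gives `|p_i - q_i| ≤ d_GH(p, q)`. A bounded set lies in such a cube.
-/

open GromovHausdorff Metric Set

namespace GromovHausdorff

variable {X Y : Type*} [MetricSpace X] [CompactSpace X] [Nonempty X]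
  [MetricSpace Y] [CompactSpace Y] [Nonempty Y]

theorem ghDist_le_of_surjective_of_abs_dist_sub_le {Φ : X → Y} (hΦ : Function.Surjective Φ)
    {r : ℝ} (h : ∀ x x', |dist x x' - dist (Φ x) (Φ x')| ≤ 2 * r) : ghDist X Y ≤ r := by
  have := ghDist_le_of_approx_subsets (s := univ) (fun x => Φ x) (ε₁ := 0) (ε₃ := 0)
    (fun x => ⟨x, mem_univ x, (dist_self x).le⟩)
    (fun y => ⟨⟨(hΦ y).choose, mem_univ _⟩, by rw [(hΦ y).choose_spec, dist_self]⟩)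
    (fun x x' => h x x')
  linarith

theorem exists_abs_dist_sub_le_two_mul_ghDist :
    ∃ Φ : X → Y, ∀ x x', |dist x x' - dist (Φ x) (Φ x')| ≤ 2 * ghDist X Y := by
  set f := optimalGHInjl X Y
  set g := optimalGHInjr X Y
  have hf : Isometry f := isometry_optimalGHInjl X Y
  have hg : Isometry g := isometry_optimalGHInjr X Y
  have hg_compact : IsCompact (range g) := isCompact_range hg.continuous
  have hne_top : hausdorffEDist (range f) (range g) ≠ ⊤ :=
    hausdorffEDist_ne_top_of_nonempty_of_bounded (range_nonempty f) (range_nonempty g)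
      (isCompact_range hf.continuous).isBounded hg_compact.isBounded
  have hclose : ∀ x : X, ∃ y : Y, dist (f x) (g y) ≤ ghDist X Y := by
    intro x
    obtain ⟨_, ⟨y, rfl⟩, hy⟩ := hg_compact.exists_infDist_eq_dist (range_nonempty g) (f x)
    refine ⟨y, hy ▸ ?_⟩
    rw [← hausdorffDist_optimal]
    exact infDist_le_hausdorffDist_of_mem (mem_range_self x) hne_top
  choose Φ hΦ using hclose
  refine ⟨Φ, fun x x' => ?_⟩
  rw [← hf.dist_eq, ← hg.dist_eq, abs_sub_le_iff]
  have := hΦ x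
  have := hΦ x'
  constructor
  · linarith [dist_triangle4 (f x) (g (Φ x)) (g (Φ x')) (f x'), dist_comm (f x') (g (Φ x'))]
  · linarith [dist_triangle4 (g (Φ x)) (f x) (f x') (g (Φ x')), dist_comm (f x) (g (Φ x))]

end GromovHausdorff

theorem dist_triangle_of_forall_ne_mem_Icc {α : Type*} {d : α → α → ℝ} {m : ℝ}
    (hself : ∀ a, d a a = 0) (hne : ∀ a b, a ≠ b → d a b ∈ Icc m (2 * m)) (a b c : α) :
    d a c ≤ d a b + d b c := by
  have hnonneg : ∀ a b, 0 ≤ d a b := fun a b => by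
    rcases eq_or_ne a b with rfl | h
    · exact (hself a).ge
    · have := hne a b h; linarith [this.1, this.2]
  rcases eq_or_ne a c with rfl | hac
  · rw [hself]; exact add_nonneg (hnonneg _ _) (hnonneg _ _)
  rcases eq_or_ne a b with rfl | hab
  · rw [hself, zero_add]
  rcases eq_or_ne b c with rfl | hbc
  · rw [hself, add_zero]
  linarith [(hne a c hac).2, (hne a b hab).1, (hne b c hbc).1]

namespace CubeCode

open scoped NNReal

abbrev Cube (N : ℕ) (C : ℝ≥0) : Type := Fin N → Icc (-(C : ℝ)) C

variable {N : ℕ} {C : ℝ≥0}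

def pairLabel (N : ℕ) : Option (Fin N) → Option (Fin N) → ℕ
  | some i, none | none, some i => i
  | _, _ => N

def pairWeight (p : Cube N C) : Option (Fin N) → Option (Fin N) → ℝ
  | some i, none | none, some i => p i
  | _, _ => 0

lemma pairLabel_comm (a b : Option (Fin N)) : pairLabel N a b = pairLabel N b a := by
  cases a <;> cases b <;> rfl

lemma pairWeight_comm (p : Cube N C) (a b : Option (Fin N)) :
    pairWeight p a b = pairWeight p b a := by
  cases a <;> cases b <;> rfl

lemma pairLabel_le (a b : Option (Fin N)) : pairLabel N a b ≤ N := by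
  cases a <;> cases b <;> simp [pairLabel, Fin.is_le']

lemma abs_pairWeight_le (p : Cube N C) (a b : Option (Fin N)) : |pairWeight p a b| ≤ C := by
  cases a <;> cases b <;> simp only [pairWeight, abs_zero, C.coe_nonneg] <;>
    exact abs_le.mpr (p _).2

lemma abs_pairWeight_sub_le (p q : Cube N C) (a b : Option (Fin N)) :
    |pairWeight p a b - pairWeight q a b| ≤ dist p q := by
  cases a <;> cases b <;> simp only [pairWeight, sub_zero, abs_zero, dist_nonneg] <;>
    exact (dist_le_pi_dist p q _).trans_eq' (by rw [Subtype.dist_eq, Real.dist_eq])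

lemma pairWeight_of_pairLabel_eq (p : Cube N C) {a b : Option (Fin N)} {i : Fin N} (hab : a ≠ b)
    (h : pairLabel N a b = i) : pairWeight p a b = p i := by
  cases a <;> cases b <;> simp_all [pairLabel, pairWeight, Fin.val_inj]
  omega

-- `spacing > 8C` separates the levels `S i` against perturbations `2 p_i` and distortions `< 4C`;
-- `offset ≥ S N + 6C` puts all nonzero distances in `[offset - 2C, 2 (offset - 2C)]`.
variable (C) in
def spacing : ℝ := 8 * C + 1

variable (N C) in
def offset : ℝ := spacing C * N + 6 * C + 1

lemma spacing_pos : 0 < spacing C := by unfold spacing; positivity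

lemma four_mul_lt_offset_sub : 4 * C < offset N C - 2 * C := by
  have : 0 ≤ spacing C * N := by have := spacing_pos (C := C); positivity
  unfold offset; linarith

def codeDist (p : Cube N C) (a b : Option (Fin N)) : ℝ :=
  if a = b then 0 else offset N C + spacing C * pairLabel N a b + 2 * pairWeight p a b

lemma codeDist_self (p : Cube N C) (a : Option (Fin N)) : codeDist p a a = 0 := if_pos rfl

lemma codeDist_of_ne (p : Cube N C) {a b : Option (Fin N)} (h : a ≠ b) :
    codeDist p a b = offset N C + spacing C * pairLabel N a b + 2 * pairWeight p a b :=
  if_neg h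

lemma codeDist_mem_Icc (p : Cube N C) {a b : Option (Fin N)} (h : a ≠ b) :
    codeDist p a b ∈ Icc (offset N C - 2 * C) (2 * (offset N C - 2 * C)) := by
  have hweight := abs_le.mp (abs_pairWeight_le p a b)
  have hlabel : spacing C * pairLabel N a b ≤ spacing C * N := by
    gcongr
    · exact spacing_pos.le
    · exact_mod_cast pairLabel_le a b
  have : 0 ≤ spacing C * pairLabel N a b := by have := spacing_pos (C := C); positivity
  rw [codeDist_of_ne p h]
  constructor <;> unfold offset <;> linarith [hweight.1, hweight.2]

lemma codeDist_comm (p : Cube N C) (a b : Option (Fin N)) : codeDist p a b = codeDist p b a := by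
  rcases eq_or_ne a b with rfl | h
  · rfl
  · rw [codeDist_of_ne p h, codeDist_of_ne p h.symm, pairLabel_comm, pairWeight_comm]

variable (C) in
def CodeSpace (_p : Cube N C) : Type := Option (Fin N)

instance (p : Cube N C) : Fintype (CodeSpace C p) := inferInstanceAs (Fintype (Option (Fin N)))
instance (p : Cube N C) : Nonempty (CodeSpace C p) := ⟨(none : Option (Fin N))⟩

noncomputable instance (p : Cube N C) : MetricSpace (CodeSpace C p) where
  dist := codeDist p
  dist_self := codeDist_self p
  dist_comm := codeDist_comm p
  dist_triangle := dist_triangle_of_forall_ne_mem_Icc (codeDist_self p)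
    (fun _ _ => codeDist_mem_Icc p)
  eq_of_dist_eq_zero {a b} h := by
    by_contra hab
    have := (codeDist_mem_Icc p hab).1
    linarith [four_mul_lt_offset_sub (N := N) (C := C), C.coe_nonneg,
      show codeDist p a b = 0 from h]

instance (p : Cube N C) : CompactSpace (CodeSpace C p) := Finite.compactSpace

lemma codeDist_none_some (p : Cube N C) (i : Fin N) :
    codeDist p none (some i) = offset N C + spacing C * i + 2 * p i :=
  codeDist_of_ne p (Option.some_ne_none i).symm

lemma pairLabel_eq_of_abs_codeDist_sub_lt (p q : Cube N C) {a b a' b' : Option (Fin N)}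
    (hab : a ≠ b) (hab' : a' ≠ b') (h : |codeDist p a b - codeDist q a' b'| < 4 * C) :
    pairLabel N a b = pairLabel N a' b' := by
  rw [codeDist_of_ne p hab, codeDist_of_ne q hab'] at h
  have hw := abs_le.mp (abs_pairWeight_le p a b)
  have hw' := abs_le.mp (abs_pairWeight_le q a' b')
  have hsep : spacing C * |(pairLabel N a b : ℝ) - pairLabel N a' b'| < spacing C * 1 := by
    rw [← abs_of_pos (spacing_pos (C := C)), ← abs_mul, abs_of_pos spacing_pos, mul_sub,
      abs_sub_lt_iff]
    rw [abs_sub_lt_iff] at h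
    unfold spacing at *
    constructor <;> linarith [hw.1, hw.2, hw'.1, hw'.2]
  have := abs_sub_lt_iff.mp (lt_of_mul_lt_mul_left hsep spacing_pos.le)
  have h1 : (pairLabel N a b : ℝ) < pairLabel N a' b' + 1 := by linarith
  have h2 : (pairLabel N a' b' : ℝ) < pairLabel N a b + 1 := by linarith
  norm_cast at h1 h2
  omega

theorem ghDist_codeSpace_le (p q : Cube N C) :
    ghDist (CodeSpace C p) (CodeSpace C q) ≤ dist p q := by
  refine ghDist_le_of_surjective_of_abs_dist_sub_le (X := CodeSpace C p) (Y := CodeSpace C q)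
    (Φ := id) Function.surjective_id fun (a b : Option (Fin N)) => ?_
  change |codeDist p a b - codeDist q a b| ≤ 2 * dist p q
  rcases eq_or_ne a b with rfl | h
  · rw [codeDist_self, codeDist_self, sub_self, abs_zero]; positivity
  · rw [codeDist_of_ne p h, codeDist_of_ne q h, add_sub_add_left_eq_sub, ← mul_sub, abs_mul,
      abs_two]
    exact mul_le_mul_of_nonneg_left (abs_pairWeight_sub_le p q a b) zero_le_two

theorem dist_apply_le_ghDist_codeSpace (p q : Cube N C) (i : Fin N) :
    dist (p i) (q i) ≤ ghDist (CodeSpace C p) (CodeSpace C q) := by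
  set H := ghDist (CodeSpace C p) (CodeSpace C q)
  rw [Subtype.dist_eq, Real.dist_eq]
  by_cases hH : 2 * C ≤ H
  · linarith [abs_sub (p i : ℝ) (q i), abs_le.mpr (p i).2, abs_le.mpr (q i).2]
  push Not at hH
  obtain ⟨Φ, hΦ⟩ :=
    exists_abs_dist_sub_le_two_mul_ghDist (X := CodeSpace C p) (Y := CodeSpace C q)
  set a : Option (Fin N) := Φ none
  set b : Option (Fin N) := Φ (some i)
  have hdist : |codeDist p none (some i) - codeDist q a b| ≤ 2 * H := hΦ none (some i)
  have hab : a ≠ b := by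
    intro hab
    have hzero : codeDist q a b = 0 := hab ▸ codeDist_self q b
    rw [hzero, sub_zero] at hdist
    have hfar := (codeDist_mem_Icc p (Option.some_ne_none i).symm).1
    linarith [le_abs_self (codeDist p none (some i)), four_mul_lt_offset_sub (N := N) (C := C)]
  have hlabel : pairLabel N a b = i :=
    (pairLabel_eq_of_abs_codeDist_sub_lt p q (Option.some_ne_none i).symm hab (by linarith)).symm
  rw [codeDist_none_some, codeDist_of_ne q hab, hlabel, pairWeight_of_pairLabel_eq q hab hlabel,
    add_sub_add_left_eq_sub, ← mul_sub, abs_mul, abs_two] at hdist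
  linarith

theorem isometry_toGHSpace_codeSpace :
    Isometry fun p : Cube N C => toGHSpace (CodeSpace C p) :=
  Isometry.of_dist_eq fun p q => le_antisymm (ghDist_codeSpace_le p q)
    ((dist_pi_le_iff dist_nonneg).mpr (dist_apply_le_ghDist_codeSpace p q))

end CubeCode

theorem bounded_subset_chebyshev_isometric_embedding_GH {N : ℕ}
    (A : Set (Fin N → ℝ)) (hA : Bornology.IsBounded A) :
    ∃ K : A → GromovHausdorff.GHSpace,
      ∀ x y : A, dist (K x) (K y) = dist (x : Fin N → ℝ) (y : Fin N → ℝ) := by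
  obtain ⟨R, hR⟩ := isBounded_iff_forall_norm_le.mp hA
  have hcube : ∀ x ∈ A, ∀ i, x i ∈ Icc (-(R.toNNReal : ℝ)) R.toNNReal := fun x hx i =>
    abs_le.mp (((norm_le_pi_norm x i).trans (hR x hx)).trans (Real.le_coe_toNNReal R))
  let toCube : A → CubeCode.Cube N R.toNNReal := fun x i => ⟨x.1 i, hcube x x.2 i⟩
  refine ⟨fun x => toGHSpace (CubeCode.CodeSpace _ (toCube x)), fun x y => ?_⟩
  rw [CubeCode.isometry_toGHSpace_codeSpace.dist_eq, dist_pi_def, dist_pi_def]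
  rfl
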